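/- Let X ⊆ ℝ^s be compact, f : X → ℝ^p continuous, and let ξ be a Borel probability measure on X with M(ξ) = ∫_X f(x) f(x)ᵀ dξ(x) positive definite. If there exists x_0 ∈ X with f(x_0)ᵀ M(ξ)⁻¹ f(x_0) > p, then there exists α ∈ (0,1) such that det M( (1−α)·ξ + α·δ_{x_0} ) > det M(ξ), where δ_{x_0} is the Dirac measure at x_0. -/

import Mathlib

/-!
With `M = M(ξ)`, `v = f x₀` and `d = vᵀ M⁻¹ v`, the mixed design has information matrix
`(1 - α) M + α v vᵀ = (1 - α) (M + α / (1 - α) v vᵀ)`, so by the matrix determinant lemma its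
determinant is `(1 - α)^p (1 + α / (1 - α) d) det M`. The scalar factor is `1` at `α = 0` with
derivative `d - p > 0` there, hence exceeds `1` for small `α > 0`.
-/

open Matrix MeasureTheory

/-- Information matrix `M(ξ) = ∫ f(x) f(x)ᵀ dξ(x)` of a design `ξ` on `X`. -/
noncomputable def infoM {s p : ℕ} {X : Set (Fin s → ℝ)} (f : X → Fin p → ℝ)
    (ξ : Measure X) : Matrix (Fin p) (Fin p) ℝ :=
  Matrix.of fun i j => ∫ x, f x i * f x j ∂ξ

open Topology Filter Set

lemma HasDerivAt.eventually_nhdsGT_lt_of_pos {g : ℝ → ℝ} {g' x : ℝ} (hg : HasDerivAt g g' x)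
    (hg' : 0 < g') : ∀ᶠ y in 𝓝[>] x, g x < g y := by
  filter_upwards [(hg.tendsto_slope.mono_left (nhdsGT_le_nhdsNE x)).eventually
    (eventually_gt_nhds hg'), self_mem_nhdsWithin] with y hslope hy
  rw [slope_def_field] at hslope
  exact sub_pos.1 ((div_pos_iff_of_pos_right (sub_pos.2 hy)).1 hslope)

lemma exists_one_lt_pow_mul_one_add {n : ℕ} {d : ℝ} (hd : n < d) :
    ∃ α ∈ Ioo (0 : ℝ) 1, 1 < (1 - α) ^ n * (1 + α / (1 - α) * d) := by
  have hderiv : HasDerivAt (fun α : ℝ => (1 - α) ^ n * (1 + α / (1 - α) * d)) (d - n) 0 := by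
    have h1 : HasDerivAt (fun α : ℝ => 1 - α) (-1) 0 := (hasDerivAt_id 0).const_sub 1
    exact ((h1.fun_pow n).fun_mul ((((hasDerivAt_id' 0).fun_div h1 (by norm_num)).mul_const
      d).const_add 1)).congr_deriv (by simp; ring)
  obtain ⟨α, hlt, hα⟩ :=
    ((hderiv.eventually_nhdsGT_lt_of_pos (sub_pos.2 hd)).and (Ioo_mem_nhdsGT one_pos)).exists
  exact ⟨α, hα, by simpa using hlt⟩

theorem Matrix.det_add_vecMulVec {ι R : Type*} [Fintype ι] [DecidableEq ι] [CommRing R]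
    {A : Matrix ι ι R} (hA : IsUnit A.det) (u v : ι → R) :
    (A + vecMulVec u v).det = A.det * (1 + v ⬝ᵥ A⁻¹ *ᵥ u) := by
  rw [vecMulVec_eq Unit, det_add_replicateCol_mul_replicateRow hA, Matrix.mul_assoc,
    ← replicateCol_mulVec, det_unique (n := Unit), add_apply, one_apply_eq,
    replicateRow_mul_replicateCol_apply]

theorem Matrix.det_smul_add_smul_vecMulVec {ι 𝕜 : Type*} [Fintype ι] [DecidableEq ι] [Field 𝕜]
    {M : Matrix ι ι 𝕜} (hM : IsUnit M.det) (v : ι → 𝕜) {α : 𝕜} (hα : α ≠ 1) :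
    ((1 - α) • M + α • vecMulVec v v).det =
      (1 - α) ^ Fintype.card ι * (1 + α / (1 - α) * (v ⬝ᵥ M⁻¹ *ᵥ v)) * M.det := by
  have h1α : 1 - α ≠ 0 := sub_ne_zero.2 hα.symm
  have hsplit : (1 - α) • M + α • vecMulVec v v =
      (1 - α) • (M + vecMulVec ((α / (1 - α)) • v) v) := by
    rw [smul_add, smul_vecMulVec, smul_smul, mul_div_cancel₀ _ h1α]
  rw [hsplit, det_smul, det_add_vecMulVec hM, mulVec_smul, dotProduct_smul, smul_eq_mul]
  ring

section InfoMatrix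

variable {s p : ℕ} {X : Set (Fin s → ℝ)} {f : X → Fin p → ℝ}

lemma integrable_mul_apply_of_isCompact (hX : IsCompact X) (hf : Continuous f) (μ : Measure X)
    [IsFiniteMeasure μ] (i j : Fin p) : Integrable (fun x => f x i * f x j) μ :=
  have : CompactSpace X := isCompact_iff_compactSpace.mp hX
  ((continuous_apply i).comp hf |>.mul ((continuous_apply j).comp hf))
    |>.integrable_of_hasCompactSupport (HasCompactSupport.of_compactSpace _)

lemma infoM_add_measure {μ ν : Measure X} (hμ : ∀ i j, Integrable (fun x => f x i * f x j) μ)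
    (hν : ∀ i j, Integrable (fun x => f x i * f x j) ν) :
    infoM f (μ + ν) = infoM f μ + infoM f ν := by
  ext i j
  exact integral_add_measure (hμ i j) (hν i j)

lemma infoM_smul_measure (c : ENNReal) (μ : Measure X) :
    infoM f (c • μ) = c.toReal • infoM f μ := by
  ext i j
  exact integral_smul_measure _ c

lemma infoM_dirac (x : X) : infoM f (Measure.dirac x) = vecMulVec (f x) (f x) := by
  ext i j
  exact integral_dirac _ x

lemma infoM_mixture_dirac (hX : IsCompact X) (hf : Continuous f) (ξ : Measure X)
    [IsFiniteMeasure ξ] (x₀ : X) {α : ℝ} (hα₀ : 0 ≤ α) (hα₁ : α ≤ 1) :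
    infoM f (ENNReal.ofReal (1 - α) • ξ + ENNReal.ofReal α • Measure.dirac x₀) =
      (1 - α) • infoM f ξ + α • vecMulVec (f x₀) (f x₀) := by
  have hint (μ : Measure X) [IsFiniteMeasure μ] (c : ℝ) (i j : Fin p) :=
    (integrable_mul_apply_of_isCompact hX hf μ i j).smul_measure (ENNReal.ofReal_ne_top (r := c))
  rw [infoM_add_measure (hint ξ _) (hint _ _), infoM_smul_measure,
    infoM_smul_measure, infoM_dirac, ENNReal.toReal_ofReal (sub_nonneg.2 hα₁),
    ENNReal.toReal_ofReal hα₀]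

end InfoMatrix

/-- Improvement-step guarantee of the first-order exchange algorithm: if a design `ξ`
with positive definite information matrix fails the D-optimality equivalence condition
at a point `x₀` (i.e. `f(x₀)ᵀ M(ξ)⁻¹ f(x₀) > p`), then mixing a small mass `α` at `x₀`
strictly increases the determinant of the information matrix. -/
theorem stmt13 {s p : ℕ} (X : Set (Fin s → ℝ)) (hX : IsCompact X)
    (f : X → Fin p → ℝ) (hf : Continuous f)
    (ξ : Measure X) [IsProbabilityMeasure ξ]
    (hM : (infoM f ξ).PosDef)
    (x0 : X) (hx0 : (p : ℝ) < f x0 ⬝ᵥ (infoM f ξ)⁻¹ *ᵥ f x0) :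
    ∃ α ∈ Set.Ioo (0 : ℝ) 1,
      (infoM f ξ).det <
        (infoM f (ENNReal.ofReal (1 - α) • ξ +
          ENNReal.ofReal α • Measure.dirac x0)).det := by
  obtain ⟨α, ⟨hα₀, hα₁⟩, hgain⟩ := exists_one_lt_pow_mul_one_add hx0
  refine ⟨α, ⟨hα₀, hα₁⟩, ?_⟩
  rw [infoM_mixture_dirac hX hf ξ x0 hα₀.le hα₁.le,
    det_smul_add_smul_vecMulVec hM.det_pos.ne'.isUnit _ hα₁.ne, Fintype.card_fin]
  exact lt_mul_left hM.det_pos hgain
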